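/- Let U : X → (0,∞) be measurable. Assume: Φ[U](x) < ∞ for μ-almost every x; Ψ[U](y) < ∞ for ν-almost every y; and μ({x : p(x,y) > 0}) > 0 for ν-almost every y. Then any measurable function u : X → (0,∞) such that c⁻¹·U ≤ u ≤ c·U for some finite c ≥ 1 satisfies ∫_X (Φ[u](x)/u(x)) dμ(x) = 1. -/

import Mathlib

open MeasureTheory ENNReal Filter Topology

noncomputable section

/-- `Ψ[u](y) = ∫_X p(x',y) u(x')⁻¹ dμ(x')`. -/
def fortetPsi {X Y : Type*} [MeasurableSpace X]
    (p : X → Y → ℝ≥0∞) (μ : Measure X) (u : X → ℝ≥0∞) (y : Y) : ℝ≥0∞ :=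
  ∫⁻ x, p x y * (u x)⁻¹ ∂μ

/-- The Fortet mapping `Φ[u](x) = ∫_Y p(x,y) Ψ[u](y)⁻¹ dν(y)`. -/
def fortetPhi {X Y : Type*} [MeasurableSpace X] [MeasurableSpace Y]
    (p : X → Y → ℝ≥0∞) (μ : Measure X) (ν : Measure Y) (u : X → ℝ≥0∞) (x : X) : ℝ≥0∞ :=
  ∫⁻ y, p x y * (fortetPsi p μ u y)⁻¹ ∂ν

/-!
Dividing by `u` and applying Tonelli, `∫ Φ[u] / u dμ = ∫ Ψ[u]⁻¹ Ψ[u] dν`, so it suffices that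
`0 < Ψ[u] < ∞` holds `ν`-a.e. Positivity comes from `μ {x | 0 < p x y} > 0` and finiteness of `u`;
finiteness comes from `Ψ[u] ≤ c Ψ[U]`, a consequence of `c⁻¹ U ≤ u`.
-/

theorem ENNReal.inv_le_mul_inv_of_inv_mul_le {a b c : ℝ≥0∞} (hc₀ : c ≠ 0) (hc : c ≠ ∞)
    (h : c⁻¹ * a ≤ b) : b⁻¹ ≤ c * a⁻¹ := by
  have := ENNReal.inv_le_inv.mpr h
  rwa [ENNReal.mul_inv (Or.inl (ENNReal.inv_ne_zero.mpr hc)) (Or.inl (inv_ne_top.mpr hc₀)),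
    inv_inv] at this

section Fortet

variable {X Y : Type*} [MeasurableSpace X] {p : X → Y → ℝ≥0∞} {μ : Measure X} {u : X → ℝ≥0∞}

theorem fortetPsi_pos {y : Y} (hp : Measurable fun x => p x y) (hu : Measurable u)
    (hu_fin : ∀ x, u x ≠ ∞) (hy : 0 < μ {x | 0 < p x y}) : 0 < fortetPsi p μ u y := by
  refine pos_iff_ne_zero.mpr fun h₀ => hy.ne' (measure_mono_null (fun x hx => ?_)
    ((lintegral_eq_zero_iff (hp.mul hu.inv)).mp h₀))
  exact mul_ne_zero (ne_of_gt hx) (ENNReal.inv_ne_zero.mpr (hu_fin x))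

theorem fortetPsi_le_const_mul {U : X → ℝ≥0∞} {c : ℝ≥0∞} (hc : c ≠ ∞)
    (h : ∀ x, (u x)⁻¹ ≤ c * (U x)⁻¹) (y : Y) :
    fortetPsi p μ u y ≤ c * fortetPsi p μ U y := by
  rw [fortetPsi, fortetPsi, ← lintegral_const_mul' c _ hc]
  refine lintegral_mono fun x => ?_
  calc p x y * (u x)⁻¹ ≤ p x y * (c * (U x)⁻¹) := by gcongr; exact h x
    _ = c * (p x y * (U x)⁻¹) := mul_left_comm _ _ _

variable [MeasurableSpace Y] {ν : Measure Y}

theorem measurable_fortetPsi [SFinite μ] (hp : Measurable (Function.uncurry p))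
    (hu : Measurable u) : Measurable (fortetPsi p μ u) :=
  ((hp.comp measurable_swap).mul (hu.comp measurable_snd).inv).lintegral_prod_right'

theorem lintegral_fortetPhi_div [SFinite μ] [SFinite ν] (hp : Measurable (Function.uncurry p))
    (hu : Measurable u) :
    ∫⁻ x, fortetPhi p μ ν u x / u x ∂μ =
      ∫⁻ y, (fortetPsi p μ u y)⁻¹ * fortetPsi p μ u y ∂ν := by
  have hΨ := measurable_fortetPsi (μ := μ) hp hu
  calc ∫⁻ x, fortetPhi p μ ν u x / u x ∂μ
      = ∫⁻ x, ∫⁻ y, p x y * (fortetPsi p μ u y)⁻¹ * (u x)⁻¹ ∂ν ∂μ := by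
        refine lintegral_congr fun x => ?_
        rw [div_eq_mul_inv, fortetPhi]
        exact (lintegral_mul_const _ (hp.of_uncurry_left.mul hΨ.inv)).symm
    _ = ∫⁻ y, ∫⁻ x, p x y * (fortetPsi p μ u y)⁻¹ * (u x)⁻¹ ∂μ ∂ν :=
        lintegral_lintegral_swap
          ((hp.mul (hΨ.comp measurable_snd).inv).mul (hu.comp measurable_fst).inv).aemeasurable
    _ = ∫⁻ y, (fortetPsi p μ u y)⁻¹ * fortetPsi p μ u y ∂ν := by
        refine lintegral_congr fun y => ?_
        simp_rw [mul_right_comm (p _ y), mul_comm _ (fortetPsi p μ u y)⁻¹]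
        exact lintegral_const_mul _ (hp.of_uncurry_right.mul hu.inv)

end Fortet

theorem fortet_integral_one_general
    {X Y : Type*} [MeasurableSpace X] [MeasurableSpace Y]
    (μ : Measure X) (ν : Measure Y)
    [IsProbabilityMeasure μ] [IsProbabilityMeasure ν]
    (p : X → Y → ℝ≥0∞)
    (hp_meas : Measurable (Function.uncurry p))
    (U : X → ℝ≥0∞)
    (hPsiU : ∀ᵐ y ∂ν, fortetPsi p μ U y < ∞)
    (hpos_ae : ∀ᵐ y ∂ν, 0 < μ {x | 0 < p x y})
    (u : X → ℝ≥0∞) (hu_meas : Measurable u)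
    (hu_fin : ∀ x, u x ≠ ∞)
    (c : ℝ≥0∞) (hc_one : 1 ≤ c) (hc_fin : c ≠ ∞)
    (hu_bound : ∀ x, c⁻¹ * U x ≤ u x ∧ u x ≤ c * U x) :
    ∫⁻ x, fortetPhi p μ ν u x / u x ∂μ = 1 := by
  have hc₀ : c ≠ 0 := (zero_lt_one.trans_le hc_one).ne'
  have hΨ_le : ∀ y, fortetPsi p μ u y ≤ c * fortetPsi p μ U y :=
    fortetPsi_le_const_mul hc_fin fun x =>
      ENNReal.inv_le_mul_inv_of_inv_mul_le hc₀ hc_fin (hu_bound x).1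
  rw [lintegral_fortetPhi_div hp_meas hu_meas, ← measure_univ (μ := ν), ← lintegral_one]
  refine lintegral_congr_ae ?_
  filter_upwards [hpos_ae, hPsiU] with y hy hPsi_fin
  have hΨ_pos := fortetPsi_pos hp_meas.of_uncurry_right hu_meas hu_fin hy
  have hΨ_fin := (hΨ_le y).trans_lt (mul_lt_top hc_fin.lt_top hPsi_fin)
  exact ENNReal.inv_mul_cancel hΨ_pos.ne' hΨ_fin.ne

theorem fortet_integral_one
    {X Y : Type*} [MeasurableSpace X] [MeasurableSpace Y]
    (μ : Measure X) (ν : Measure Y)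
    [IsProbabilityMeasure μ] [IsProbabilityMeasure ν]
    (p : X → Y → ℝ≥0∞)
    (hp_meas : Measurable (Function.uncurry p))
    (hp_fin : ∀ x y, p x y ≠ ∞)
    (U : X → ℝ≥0∞) (hU_meas : Measurable U)
    (hU_pos : ∀ x, 0 < U x) (hU_fin : ∀ x, U x ≠ ∞)
    (hPhiU : ∀ᵐ x ∂μ, fortetPhi p μ ν U x < ∞)
    (hPsiU : ∀ᵐ y ∂ν, fortetPsi p μ U y < ∞)
    (hpos_ae : ∀ᵐ y ∂ν, 0 < μ {x | 0 < p x y})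
    (u : X → ℝ≥0∞) (hu_meas : Measurable u)
    (hu_pos : ∀ x, 0 < u x) (hu_fin : ∀ x, u x ≠ ∞)
    (c : ℝ≥0∞) (hc_one : 1 ≤ c) (hc_fin : c ≠ ∞)
    (hu_bound : ∀ x, c⁻¹ * U x ≤ u x ∧ u x ≤ c * U x) :
    ∫⁻ x, fortetPhi p μ ν u x / u x ∂μ = 1 :=
  fortet_integral_one_general μ ν p hp_meas U hPsiU hpos_ae u hu_meas hu_fin c hc_one hc_fin
    hu_bound

end
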